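/- arXiv:1701.00753 — 2 statements merged into one kernel-verified Lean document; each statement's English description precedes it below -/
import Mathlib

section
/- Under the same setup, for any two diagonal sign matrices Σ, Σ̃, ‖J^{-1}(J_{σ̃} - J_σ)‖_p ≤ 2ρ̂/(1 - ‖L‖_p)^2. -/
/-!
With `M_σ = Σ (1 - L Σ)⁻¹` the difference factors as `J⁻¹ (J_σ̃ - J_σ) = (J⁻¹ Y) (M_σ̃ - M_σ) Z`.
Since `‖L Σ‖ ≤ ‖L‖ < 1`, the perturbation bound `‖(1 - A)⁻¹‖ ≤ (1 - ‖A‖)⁻¹` gives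
`‖M_σ‖ ≤ (1 - ‖L‖)⁻¹`, hence `‖M_σ̃ - M_σ‖ ≤ 2 / (1 - ‖L‖) ≤ 2 / (1 - ‖L‖)²`.
-/

/-- An operator norm family induced by an absolute (monotone) vector norm,
abstracting the induced matrix p-norms. -/
structure PNormFamily where
  /-- the vector norm -/
  vnorm : ∀ {k : ℕ}, (Fin k → ℝ) → ℝ
  /-- the induced matrix norm -/
  mnorm : ∀ {m k : ℕ}, Matrix (Fin m) (Fin k) ℝ → ℝ
  vnorm_nonneg : ∀ {k : ℕ} (x : Fin k → ℝ), 0 ≤ vnorm x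
  vnorm_eq_zero_iff : ∀ {k : ℕ} (x : Fin k → ℝ), vnorm x = 0 ↔ x = 0
  vnorm_add_le : ∀ {k : ℕ} (x y : Fin k → ℝ), vnorm (x + y) ≤ vnorm x + vnorm y
  vnorm_smul : ∀ {k : ℕ} (c : ℝ) (x : Fin k → ℝ), vnorm (c • x) = |c| * vnorm x
  vnorm_mono : ∀ {k : ℕ} (x y : Fin k → ℝ), (∀ i, |x i| ≤ |y i|) → vnorm x ≤ vnorm y
  mnorm_spec : ∀ {m k : ℕ} (A : Matrix (Fin m) (Fin k) ℝ) (x : Fin k → ℝ),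
    vnorm (A.mulVec x) ≤ mnorm A * vnorm x
  mnorm_le : ∀ {m k : ℕ} (A : Matrix (Fin m) (Fin k) ℝ) (c : ℝ), 0 ≤ c →
    (∀ x : Fin k → ℝ, vnorm (A.mulVec x) ≤ c * vnorm x) → mnorm A ≤ c

theorem Matrix.eq_zero_of_dim_eq_zero {m k : ℕ} (h : m = 0 ∨ k = 0)
    (A : Matrix (Fin m) (Fin k) ℝ) : A = 0 := by
  rcases h with rfl | rfl <;> exact Subsingleton.elim _ _

namespace PNormFamily

open Matrix

variable (P : PNormFamily) {m k l : ℕ}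

theorem vnorm_neg (x : Fin k → ℝ) : P.vnorm (-x) = P.vnorm x := by
  rw [← neg_one_smul ℝ x, P.vnorm_smul, abs_neg, abs_one, one_mul]

-- Over `Fin 0` every vector vanishes, so nothing forces `mnorm` to be nonnegative there.
theorem mnorm_nonneg (hk : 0 < k) (A : Matrix (Fin m) (Fin k) ℝ) : 0 ≤ P.mnorm A := by
  have hx : (fun _ => 1 : Fin k → ℝ) ≠ 0 := fun h => one_ne_zero (congrFun h ⟨0, hk⟩)
  have hpos : 0 < P.vnorm (fun _ => 1 : Fin k → ℝ) :=
    (P.vnorm_nonneg _).lt_of_ne fun h => hx ((P.vnorm_eq_zero_iff _).mp h.symm)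
  exact nonneg_of_mul_nonneg_left ((P.vnorm_nonneg _).trans (P.mnorm_spec A _)) hpos

theorem mnorm_zero_nonpos : P.mnorm (0 : Matrix (Fin m) (Fin k) ℝ) ≤ 0 :=
  P.mnorm_le _ 0 le_rfl fun x => by
    rw [zero_mulVec, (P.vnorm_eq_zero_iff 0).mpr rfl, zero_mul]

theorem mnorm_mul_le {A : Matrix (Fin m) (Fin k) ℝ} {B : Matrix (Fin k) (Fin l) ℝ}
    (hA : 0 ≤ P.mnorm A) (hB : 0 ≤ P.mnorm B) :
    P.mnorm (A * B) ≤ P.mnorm A * P.mnorm B :=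
  P.mnorm_le _ _ (mul_nonneg hA hB) fun x => by
    rw [← mulVec_mulVec, mul_assoc]
    exact (P.mnorm_spec A _).trans (mul_le_mul_of_nonneg_left (P.mnorm_spec B x) hA)

theorem mnorm_sub_le {A B : Matrix (Fin m) (Fin k) ℝ}
    (hA : 0 ≤ P.mnorm A) (hB : 0 ≤ P.mnorm B) :
    P.mnorm (A - B) ≤ P.mnorm A + P.mnorm B :=
  P.mnorm_le _ _ (add_nonneg hA hB) fun x => by
    rw [sub_mulVec, sub_eq_add_neg, add_mul]
    calc P.vnorm (A *ᵥ x + -(B *ᵥ x)) ≤ P.vnorm (A *ᵥ x) + P.vnorm (B *ᵥ x) := by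
          simpa only [P.vnorm_neg] using P.vnorm_add_le (A *ᵥ x) (-(B *ᵥ x))
      _ ≤ P.mnorm A * P.vnorm x + P.mnorm B * P.vnorm x :=
          add_le_add (P.mnorm_spec A x) (P.mnorm_spec B x)

theorem mnorm_diagonal_le {d : Fin k → ℝ} {c : ℝ} (hc : 0 ≤ c) (hd : ∀ i, |d i| ≤ c) :
    P.mnorm (diagonal d) ≤ c :=
  P.mnorm_le _ c hc fun x => by
    calc P.vnorm (diagonal d *ᵥ x) ≤ P.vnorm (c • x) := by
          refine P.vnorm_mono _ _ fun i => ?_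
          rw [mulVec_diagonal, Pi.smul_apply, smul_eq_mul, abs_mul, abs_mul,
            abs_of_nonneg hc]
          exact mul_le_mul_of_nonneg_right (hd i) (abs_nonneg _)
      _ = c * P.vnorm x := by rw [P.vnorm_smul, abs_of_nonneg hc]

theorem vnorm_sub_le_vnorm_one_sub_mulVec (A : Matrix (Fin k) (Fin k) ℝ) (y : Fin k → ℝ) :
    P.vnorm y - P.mnorm A * P.vnorm y ≤ P.vnorm ((1 - A) *ᵥ y) := by
  have hsplit : y = (1 - A) *ᵥ y + A *ᵥ y := by
    rw [sub_mulVec, one_mulVec, sub_add_cancel]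
  have := P.vnorm_add_le ((1 - A) *ᵥ y) (A *ᵥ y)
  rw [← hsplit] at this
  linarith [P.mnorm_spec A y]

theorem isUnit_one_sub {A : Matrix (Fin k) (Fin k) ℝ} (hA : P.mnorm A < 1) :
    IsUnit (1 - A) := by
  refine mulVec_injective_iff_isUnit.mp fun y z hyz => ?_
  rw [← sub_eq_zero, ← mulVec_sub] at hyz
  rw [← sub_eq_zero]
  have hle := P.vnorm_sub_le_vnorm_one_sub_mulVec A (y - z)
  rw [hyz, (P.vnorm_eq_zero_iff 0).mpr rfl] at hle
  refine (P.vnorm_eq_zero_iff _).mp (le_antisymm ?_ (P.vnorm_nonneg _))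
  nlinarith [P.vnorm_nonneg (y - z)]

theorem mnorm_inv_one_sub_le {A : Matrix (Fin k) (Fin k) ℝ} (hA : P.mnorm A < 1) :
    P.mnorm (1 - A)⁻¹ ≤ (1 - P.mnorm A)⁻¹ := by
  have hgap : 0 < 1 - P.mnorm A := sub_pos.mpr hA
  refine P.mnorm_le _ _ (inv_nonneg.mpr hgap.le) fun x => ?_
  have hx : (1 - A) *ᵥ ((1 - A)⁻¹ *ᵥ x) = x := by
    rw [mulVec_mulVec, mul_nonsing_inv _
      ((isUnit_iff_isUnit_det _).mp (P.isUnit_one_sub hA)), one_mulVec]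
  have hle := P.vnorm_sub_le_vnorm_one_sub_mulVec A ((1 - A)⁻¹ *ᵥ x)
  rw [hx] at hle
  rw [inv_mul_eq_div, le_div_iff₀ hgap]
  linarith

theorem mnorm_diagonal_mul_inv_one_sub_mul_diagonal_le (hk : 0 < k)
    {L : Matrix (Fin k) (Fin k) ℝ} (hL : P.mnorm L < 1) {σ : Fin k → ℝ}
    (hσ : ∀ i, |σ i| ≤ 1) :
    P.mnorm (diagonal σ * (1 - L * diagonal σ)⁻¹) ≤ (1 - P.mnorm L)⁻¹ := by
  have hdiag : P.mnorm (diagonal σ) ≤ 1 := P.mnorm_diagonal_le zero_le_one hσ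
  have hLdiag : P.mnorm (L * diagonal σ) ≤ P.mnorm L :=
    (P.mnorm_mul_le (P.mnorm_nonneg hk _) (P.mnorm_nonneg hk _)).trans
      (mul_le_of_le_one_right (P.mnorm_nonneg hk _) hdiag)
  have hgap : 0 < 1 - P.mnorm L := sub_pos.mpr hL
  calc P.mnorm (diagonal σ * (1 - L * diagonal σ)⁻¹)
      ≤ P.mnorm (diagonal σ) * P.mnorm (1 - L * diagonal σ)⁻¹ :=
        P.mnorm_mul_le (P.mnorm_nonneg hk _) (P.mnorm_nonneg hk _)
    _ ≤ 1 * (1 - P.mnorm (L * diagonal σ))⁻¹ := by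
        gcongr
        · exact P.mnorm_nonneg hk _
        · exact P.mnorm_inv_one_sub_le (hLdiag.trans_lt hL)
    _ ≤ (1 - P.mnorm L)⁻¹ := by
        rw [one_mul]
        gcongr

theorem mnorm_diagonal_mul_inv_one_sub_mul_diagonal_sub_le (hk : 0 < k)
    {L : Matrix (Fin k) (Fin k) ℝ} (hL : P.mnorm L < 1) {σ σ' : Fin k → ℝ}
    (hσ : ∀ i, |σ i| ≤ 1) (hσ' : ∀ i, |σ' i| ≤ 1) :
    P.mnorm (diagonal σ' * (1 - L * diagonal σ')⁻¹ -
        diagonal σ * (1 - L * diagonal σ)⁻¹) ≤ 2 / (1 - P.mnorm L) ^ 2 := by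
  have hgap : 0 < 1 - P.mnorm L := sub_pos.mpr hL
  have hgap_le_one : 1 - P.mnorm L ≤ 1 := by linarith [P.mnorm_nonneg hk L]
  calc _ ≤ (1 - P.mnorm L)⁻¹ + (1 - P.mnorm L)⁻¹ :=
        (P.mnorm_sub_le (P.mnorm_nonneg hk _) (P.mnorm_nonneg hk _)).trans
          (add_le_add (P.mnorm_diagonal_mul_inv_one_sub_mul_diagonal_le hk hL hσ')
            (P.mnorm_diagonal_mul_inv_one_sub_mul_diagonal_le hk hL hσ))
    _ ≤ 2 / (1 - P.mnorm L) ^ 2 := by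
        rw [← two_mul, div_eq_mul_inv]
        gcongr
        exact pow_le_of_le_one hgap.le hgap_le_one two_ne_zero

end PNormFamily

theorem abs_le_one_of_sign {k : ℕ} {σ : Fin k → ℝ} (hσ : ∀ i, σ i = 1 ∨ σ i = -1 ∨ σ i = 0)
    (i : Fin k) : |σ i| ≤ 1 := by
  rcases hσ i with h | h | h <;> simp [h]

theorem jacobian_difference_norm_bound_general
    (n s : ℕ) (P : PNormFamily)
    (J : Matrix (Fin n) (Fin n) ℝ) (Y : Matrix (Fin n) (Fin s) ℝ)
    (Z : Matrix (Fin s) (Fin n) ℝ) (L : Matrix (Fin s) (Fin s) ℝ)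
    (hLnorm : P.mnorm L < 1)
    (rhoHat : ℝ) (hrho : rhoHat = P.mnorm (J⁻¹ * Y) * P.mnorm Z)
    (σ σ' : Fin s → ℝ)
    (hσ : ∀ i, σ i = 1 ∨ σ i = -1 ∨ σ i = 0)
    (hσ' : ∀ i, σ' i = 1 ∨ σ' i = -1 ∨ σ' i = 0) :
    P.mnorm (J⁻¹ *
        ((J + Y * Matrix.diagonal σ' * (1 - L * Matrix.diagonal σ')⁻¹ * Z) -
          (J + Y * Matrix.diagonal σ * (1 - L * Matrix.diagonal σ)⁻¹ * Z)))
      ≤ 2 * rhoHat / (1 - P.mnorm L) ^ 2 := by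
  set K := Matrix.diagonal σ' * (1 - L * Matrix.diagonal σ')⁻¹ -
    Matrix.diagonal σ * (1 - L * Matrix.diagonal σ)⁻¹
  have hfactor : J⁻¹ * ((J + Y * Matrix.diagonal σ' * (1 - L * Matrix.diagonal σ')⁻¹ * Z) -
      (J + Y * Matrix.diagonal σ * (1 - L * Matrix.diagonal σ)⁻¹ * Z)) =
      J⁻¹ * Y * (K * Z) := by
    simp only [K, add_sub_add_left_eq_sub, Matrix.sub_mul, Matrix.mul_sub, Matrix.mul_assoc]
  rw [hfactor, hrho]
  by_cases hdim : n = 0 ∨ s = 0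
  · rw [Matrix.eq_zero_of_dim_eq_zero hdim (J⁻¹ * Y), Matrix.eq_zero_of_dim_eq_zero hdim.symm Z,
      Matrix.zero_mul]
    have hnonpos {a b : ℕ} := P.mnorm_zero_nonpos (m := a) (k := b)
    refine hnonpos.trans (div_nonneg ?_ (sq_nonneg _))
    exact mul_nonneg zero_le_two (mul_nonneg_of_nonpos_of_nonpos hnonpos hnonpos)
  obtain ⟨hn, hs⟩ : 0 < n ∧ 0 < s := by omega
  have hK := P.mnorm_diagonal_mul_inv_one_sub_mul_diagonal_sub_le hs hLnorm
    (abs_le_one_of_sign hσ) (abs_le_one_of_sign hσ')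
  calc P.mnorm (J⁻¹ * Y * (K * Z)) ≤ P.mnorm (J⁻¹ * Y) * (P.mnorm K * P.mnorm Z) :=
        (P.mnorm_mul_le (P.mnorm_nonneg hs _) (P.mnorm_nonneg hn _)).trans
          (mul_le_mul_of_nonneg_left (P.mnorm_mul_le (P.mnorm_nonneg hs _)
            (P.mnorm_nonneg hn _)) (P.mnorm_nonneg hs _))
    _ ≤ P.mnorm (J⁻¹ * Y) * (2 / (1 - P.mnorm L) ^ 2 * P.mnorm Z) := by
        gcongr
        exacts [P.mnorm_nonneg hs _, P.mnorm_nonneg hn _]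
    _ = 2 * (P.mnorm (J⁻¹ * Y) * P.mnorm Z) / (1 - P.mnorm L) ^ 2 := by ring

/-- Bound on the relative deviation between two limiting Jacobians:
`‖J⁻¹(J_σ̃ - J_σ)‖ ≤ 2ρ̂/(1-‖L‖)²` where `ρ̂ = ‖J⁻¹Y‖‖Z‖`. -/
theorem jacobian_difference_norm_bound
    (n s : ℕ) (P : PNormFamily)
    (J : Matrix (Fin n) (Fin n) ℝ) (Y : Matrix (Fin n) (Fin s) ℝ)
    (Z : Matrix (Fin s) (Fin n) ℝ) (L : Matrix (Fin s) (Fin s) ℝ)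
    (hJ : IsUnit J)
    (hL : ∀ i j : Fin s, i ≤ j → L i j = 0)
    (hLnorm : P.mnorm L < 1)
    (rhoHat : ℝ) (hrho : rhoHat = P.mnorm (J⁻¹ * Y) * P.mnorm Z)
    (σ σ' : Fin s → ℝ)
    (hσ : ∀ i, σ i = 1 ∨ σ i = -1 ∨ σ i = 0)
    (hσ' : ∀ i, σ' i = 1 ∨ σ' i = -1 ∨ σ' i = 0) :
    P.mnorm (J⁻¹ *
        ((J + Y * Matrix.diagonal σ' * (1 - L * Matrix.diagonal σ')⁻¹ * Z) -
          (J + Y * Matrix.diagonal σ * (1 - L * Matrix.diagonal σ)⁻¹ * Z)))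
      ≤ 2 * rhoHat / (1 - P.mnorm L) ^ 2 :=
  jacobian_difference_norm_bound_general n s P J Y Z L hLnorm rhoHat hrho σ σ' hσ hσ'
end

section
/- If L ∈ ℝ^{s×s} satisfies ‖L‖_p < 1 in some vector-induced p-norm, then the map G(z) = z - L|z| is a bijection on ℝ^s and its inverse is Lipschitz continuous with Lipschitz constant 1/(1 - ‖L‖_p). -/
/-! The map `z ↦ L |z|` is a contraction for `P.vnorm` with constant `P.mnorm L < 1`, because
`| |a i| - |b i| | ≤ |a i - b i|` and `P.vnorm` is monotone. Hence `G z = y` is the fixed-point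
equation `z = y + L |z|`, solvable by Banach's theorem on `ℝ^s` normed by `P.vnorm` (complete,
being finite-dimensional), and the reverse triangle inequality
`(1 - ‖L‖) ‖a - b‖ ≤ ‖G a - G b‖` gives injectivity and the Lipschitz bound on `G⁻¹`. -/

open Matrix

namespace Matrix

def subMulVecAbs {s : ℕ} (L : Matrix (Fin s) (Fin s) ℝ) (z : Fin s → ℝ) : Fin s → ℝ :=
  z - L *ᵥ fun i => |z i|

theorem subMulVecAbs_sub_subMulVecAbs {s : ℕ} (L : Matrix (Fin s) (Fin s) ℝ)
    (a b : Fin s → ℝ) :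
    L.subMulVecAbs a - L.subMulVecAbs b = (a - b) - L *ᵥ ((fun i => |a i|) - fun i => |b i|) := by
  rw [subMulVecAbs, subMulVecAbs, mulVec_sub]
  abel

end Matrix

namespace PNormFamily

variable (P : PNormFamily) {m k s : ℕ}

theorem vnorm_zero : P.vnorm (0 : Fin k → ℝ) = 0 :=
  (P.vnorm_eq_zero_iff 0).2 rfl

-- The axioms of `PNormFamily` do not force `0 ≤ mnorm A`; it can fail only on the zero space.
theorem eq_zero_of_mnorm_neg {A : Matrix (Fin m) (Fin k) ℝ} (hA : P.mnorm A < 0)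
    (x : Fin k → ℝ) : x = 0 := by
  have hAx : 0 ≤ P.mnorm A * P.vnorm x := (P.vnorm_nonneg _).trans (P.mnorm_spec A x)
  refine (P.vnorm_eq_zero_iff x).1 (le_antisymm ?_ (P.vnorm_nonneg x))
  exact nonpos_of_mul_nonneg_right hAx hA

theorem vnorm_mulVec_le_of_abs_le (A : Matrix (Fin m) (Fin k) ℝ) {x y : Fin k → ℝ}
    (hxy : ∀ i, |x i| ≤ |y i|) : P.vnorm (A *ᵥ x) ≤ P.mnorm A * P.vnorm y := by
  rcases le_or_gt 0 (P.mnorm A) with hA | hA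
  · exact (P.mnorm_spec A x).trans (mul_le_mul_of_nonneg_left (P.vnorm_mono x y hxy) hA)
  · rw [P.eq_zero_of_mnorm_neg hA x, P.eq_zero_of_mnorm_neg hA y, mulVec_zero,
      vnorm_zero, vnorm_zero, mul_zero]

theorem vnorm_mulVec_abs_sub_abs_le (A : Matrix (Fin m) (Fin k) ℝ) (a b : Fin k → ℝ) :
    P.vnorm (A *ᵥ ((fun i => |a i|) - fun i => |b i|)) ≤ P.mnorm A * P.vnorm (a - b) :=
  P.vnorm_mulVec_le_of_abs_le A fun i => abs_abs_sub_abs_le_abs_sub (a i) (b i)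

theorem one_sub_mnorm_mul_vnorm_le (L : Matrix (Fin s) (Fin s) ℝ) (a b : Fin s → ℝ) :
    (1 - P.mnorm L) * P.vnorm (a - b) ≤ P.vnorm (L.subMulVecAbs a - L.subMulVecAbs b) := by
  have htri := P.vnorm_add_le (L.subMulVecAbs a - L.subMulVecAbs b)
    (L *ᵥ ((fun i => |a i|) - fun i => |b i|))
  nth_rw 1 [L.subMulVecAbs_sub_subMulVecAbs, sub_add_cancel] at htri
  linarith [P.vnorm_mulVec_abs_sub_abs_le L a b]

theorem injective_subMulVecAbs {L : Matrix (Fin s) (Fin s) ℝ} (hL : P.mnorm L < 1) :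
    Function.Injective L.subMulVecAbs := by
  intro a b hab
  have hbound := P.one_sub_mnorm_mul_vnorm_le L a b
  rw [hab, sub_self, vnorm_zero] at hbound
  have hab0 : P.vnorm (a - b) = 0 :=
    le_antisymm (nonpos_of_mul_nonpos_right hbound (sub_pos.2 hL)) (P.vnorm_nonneg _)
  exact sub_eq_zero.1 ((P.vnorm_eq_zero_iff _).1 hab0)

-- A type synonym, so that the metric comes from `P.vnorm` rather than the sup norm of `Fin k → ℝ`.
def Vec (_P : PNormFamily) (k : ℕ) : Type := Fin k → ℝ

instance : AddCommGroup (P.Vec k) := inferInstanceAs (AddCommGroup (Fin k → ℝ))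

instance : Module ℝ (P.Vec k) := inferInstanceAs (Module ℝ (Fin k → ℝ))

instance : Norm (P.Vec k) := ⟨fun x => P.vnorm (k := k) x⟩

theorem normedSpaceCore : NormedSpace.Core ℝ (P.Vec k) where
  norm_nonneg := P.vnorm_nonneg
  norm_smul := P.vnorm_smul
  norm_triangle := P.vnorm_add_le
  norm_eq_zero_iff := P.vnorm_eq_zero_iff

noncomputable instance : NormedAddCommGroup (P.Vec k) := .ofCore P.normedSpaceCore

noncomputable instance : NormedSpace ℝ (P.Vec k) := .ofCore P.normedSpaceCore

instance : FiniteDimensional ℝ (P.Vec k) := inferInstanceAs (FiniteDimensional ℝ (Fin k → ℝ))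

instance : CompleteSpace (P.Vec k) := FiniteDimensional.complete ℝ _

theorem dist_eq_vnorm (x y : P.Vec k) : dist x y = P.vnorm (k := k) (x - y) :=
  dist_eq_norm x y

theorem surjective_subMulVecAbs {L : Matrix (Fin s) (Fin s) ℝ} (hL : P.mnorm L < 1) :
    Function.Surjective L.subMulVecAbs := by
  intro y
  let T : P.Vec s → P.Vec s := fun w => (y + L *ᵥ fun i => |w i| : Fin s → ℝ)
  have hT : ContractingWith (P.mnorm L).toNNReal T := by
    refine ⟨Real.toNNReal_lt_one.2 hL, LipschitzWith.of_dist_le_mul fun a b => ?_⟩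
    calc dist (T a) (T b) = P.vnorm (L *ᵥ ((fun i => |a i|) - fun i => |b i|)) := by
          rw [dist_eq_vnorm, mulVec_sub]; congr 1; exact add_sub_add_left_eq_sub _ _ _
      _ ≤ P.mnorm L * dist a b := by
          rw [dist_eq_vnorm]; exact P.vnorm_mulVec_abs_sub_abs_le L a b
      _ ≤ (P.mnorm L).toNNReal * dist a b :=
          mul_le_mul_of_nonneg_right (Real.le_coe_toNNReal _) dist_nonneg
  obtain ⟨z, hz⟩ : ∃ z, T z = z := ⟨_, hT.fixedPoint_isFixedPt⟩
  exact ⟨z, sub_eq_of_eq_add hz.symm⟩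

end PNormFamily

/-- If `‖L‖_p < 1` then `G(z) = z - L|z|` is a bijection of `ℝ^s` whose inverse
is Lipschitz with constant `1/(1-‖L‖_p)`. -/
theorem bijective_sub_abs_of_norm_lt_one
    (s : ℕ) (P : PNormFamily) (L : Matrix (Fin s) (Fin s) ℝ)
    (hL : P.mnorm L < 1) :
    Function.Bijective (fun z : Fin s → ℝ => z - L.mulVec fun i => |z i|) ∧
      ∀ y y' : Fin s → ℝ,
        P.vnorm (Function.invFun (fun z : Fin s → ℝ => z - L.mulVec fun i => |z i|) y -
            Function.invFun (fun z : Fin s → ℝ => z - L.mulVec fun i => |z i|) y')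
          ≤ (1 / (1 - P.mnorm L)) * P.vnorm (y - y') := by
  change Function.Bijective L.subMulVecAbs ∧ ∀ y y' : Fin s → ℝ,
    P.vnorm (Function.invFun L.subMulVecAbs y - Function.invFun L.subMulVecAbs y') ≤
      (1 / (1 - P.mnorm L)) * P.vnorm (y - y')
  have hsurj := P.surjective_subMulVecAbs hL
  refine ⟨⟨P.injective_subMulVecAbs hL, hsurj⟩, fun y y' => ?_⟩
  have hbound := P.one_sub_mnorm_mul_vnorm_le L (Function.invFun L.subMulVecAbs y)
    (Function.invFun L.subMulVecAbs y')
  rw [Function.rightInverse_invFun hsurj y, Function.rightInverse_invFun hsurj y'] at hbound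
  rw [one_div_mul_eq_div, le_div_iff₀' (sub_pos.2 hL)]
  exact hbound
end
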